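/- For 0 < 2r < t, the kernel k(t,r) := ∫_r^{t-r} (τ² - r²)^{-1/2}·((t-τ)² - r²)^{-1/2} dτ is finite and, after the change of variables τ = t/2 + (t/2 - r)·sin φ, equals ∫_{-π/2}^{π/2} ((t/2 + r)² - (t/2 - r)²·sin²φ)^{-1/2} dφ. -/

import Mathlib

/-!
The substitution `τ = t/2 + (t/2 - r) sin φ` maps `(-π/2, π/2)` injectively onto `(r, t - r)`.
Both `τ² - r²` and `(t - τ)² - r²` contain a factor `(t/2 - r)(1 ± sin φ)`, so the product of the
two square roots is `(t/2 - r) cos φ · √((t/2 + r)² - (t/2 - r)² sin² φ)`: the Jacobian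
`(t/2 - r) cos φ` cancels the singular part exactly, and what is left is continuous on
`[-π/2, π/2]`. The change-of-variables formula for injective maps, which needs no integrability
hypothesis and transfers integrability in both directions, then yields finiteness and the identity
together.
-/

open Real MeasureTheory intervalIntegral Set

theorem image_sin_Ioo : sin '' Ioo (-(π / 2)) (π / 2) = Ioo (-1) 1 :=
  sinPartialHomeomorph.image_source_eq_target

section SinSubstitution

variable {c a : ℝ}

theorem image_add_mul_sin_Ioo (ha : 0 < a) :
    (fun φ => c + a * sin φ) '' Ioo (-(π / 2)) (π / 2) = Ioo (c - a) (c + a) := by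
  have h := image_affine_Ioo ha c (-1) 1
  rw [← image_sin_Ioo, image_image] at h
  simpa [add_comm, sub_eq_add_neg] using h

theorem injOn_add_mul_sin (ha : 0 < a) :
    InjOn (fun φ => c + a * sin φ) (Ioo (-(π / 2)) (π / 2)) := by
  intro x hx y hy hxy
  refine injOn_sin (Ioo_subset_Icc_self hx) (Ioo_subset_Icc_self hy) ?_
  exact mul_left_cancel₀ ha.ne' (add_left_cancel hxy)

theorem hasDerivWithinAt_add_mul_sin (s : Set ℝ) (φ : ℝ) :
    HasDerivWithinAt (fun φ => c + a * sin φ) (a * cos φ) s φ :=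
  (((hasDerivAt_sin φ).const_mul a).const_add c).hasDerivWithinAt

variable {E : Type*} [NormedAddCommGroup E] [NormedSpace ℝ E]

theorem eqOn_abs_mul_cos_smul (ha : 0 < a) (F : ℝ → E) :
    EqOn (fun φ => |a * cos φ| • F (c + a * sin φ)) (fun φ => (a * cos φ) • F (c + a * sin φ))
      (Ioo (-(π / 2)) (π / 2)) := fun φ hφ => by
  simp only [abs_of_pos (mul_pos ha (cos_pos_of_mem_Ioo hφ))]

theorem integrableOn_Ioo_iff_sin_subst (ha : 0 < a) (F : ℝ → E) :
    IntegrableOn F (Ioo (c - a) (c + a)) ↔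
      IntegrableOn (fun φ => (a * cos φ) • F (c + a * sin φ)) (Ioo (-(π / 2)) (π / 2)) := by
  rw [← image_add_mul_sin_Ioo ha, integrableOn_image_iff_integrableOn_abs_deriv_smul
    measurableSet_Ioo (fun φ _ => hasDerivWithinAt_add_mul_sin _ φ) (injOn_add_mul_sin ha)]
  exact integrableOn_congr_fun (eqOn_abs_mul_cos_smul ha F) measurableSet_Ioo

theorem setIntegral_Ioo_eq_sin_subst (ha : 0 < a) (F : ℝ → E) :
    ∫ x in Ioo (c - a) (c + a), F x =
      ∫ φ in Ioo (-(π / 2)) (π / 2), (a * cos φ) • F (c + a * sin φ) := by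
  rw [← image_add_mul_sin_Ioo ha, integral_image_eq_integral_abs_deriv_smul
    measurableSet_Ioo (fun φ _ => hasDerivWithinAt_add_mul_sin _ φ) (injOn_add_mul_sin ha)]
  exact setIntegral_congr_fun measurableSet_Ioo (eqOn_abs_mul_cos_smul ha F)

end SinSubstitution

theorem sq_sub_sq_mul_sin_sq_pos {a b : ℝ} (hab : a ^ 2 < b ^ 2) (φ : ℝ) :
    0 < b ^ 2 - a ^ 2 * sin φ ^ 2 := by
  nlinarith [sin_sq_le_one φ, sq_nonneg a]

theorem mul_cos_mul_kernel_sin_subst {t r φ : ℝ} (hr : 0 < r) (h2r : 2 * r < t) (hφ : 0 < cos φ) :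
    (t / 2 - r) * cos φ *
        (1 / (√((t / 2 + (t / 2 - r) * sin φ) ^ 2 - r ^ 2) *
          √((t - (t / 2 + (t / 2 - r) * sin φ)) ^ 2 - r ^ 2))) =
      1 / √((t / 2 + r) ^ 2 - (t / 2 - r) ^ 2 * sin φ ^ 2) := by
  have ha : 0 < t / 2 - r := by linarith
  have hfactor : ((t / 2 + (t / 2 - r) * sin φ) ^ 2 - r ^ 2) *
        ((t - (t / 2 + (t / 2 - r) * sin φ)) ^ 2 - r ^ 2) =
      ((t / 2 - r) * cos φ) ^ 2 * ((t / 2 + r) ^ 2 - (t / 2 - r) ^ 2 * sin φ ^ 2) := by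
    linear_combination (-(t / 2 - r) ^ 2 * ((t / 2 + r) ^ 2 - (t / 2 - r) ^ 2 * sin φ ^ 2)) *
      sin_sq_add_cos_sq φ
  have hτ : r ≤ t / 2 + (t / 2 - r) * sin φ := by
    nlinarith [mul_le_mul_of_nonneg_left (neg_one_le_sin φ) ha.le]
  have hnonneg : 0 ≤ (t / 2 + (t / 2 - r) * sin φ) ^ 2 - r ^ 2 := by nlinarith
  have hac : 0 < (t / 2 - r) * cos φ := mul_pos ha hφ
  rw [← sqrt_mul hnonneg, hfactor, sqrt_mul (by positivity), sqrt_sq hac.le, mul_one_div,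
    div_mul_cancel_left₀ hac.ne', one_div]

theorem continuous_one_div_sqrt_sq_sub_sq_mul_sin_sq {a b : ℝ} (hab : a ^ 2 < b ^ 2) :
    Continuous fun φ => 1 / √(b ^ 2 - a ^ 2 * sin φ ^ 2) :=
  continuous_const.div (by fun_prop) fun φ => (sqrt_pos.2 (sq_sub_sq_mul_sin_sq_pos hab φ)).ne'

/-- For `0 < 2r < t`, the kernel
`k(t,r) = ∫_r^{t-r} (τ² - r²)^{-1/2} ((t-τ)² - r²)^{-1/2} dτ` is finite
(the integrand is interval integrable despite its endpoint singularities), and after the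
change of variables `τ = t/2 + (t/2 - r) sin φ` equals
`∫_{-π/2}^{π/2} ((t/2 + r)² - (t/2 - r)² sin²φ)^{-1/2} dφ`. -/
theorem kernel_finite_and_substitution (t r : ℝ) (hr : 0 < r) (h2r : 2 * r < t) :
    IntervalIntegrable
        (fun τ => 1 / (Real.sqrt (τ ^ 2 - r ^ 2) * Real.sqrt ((t - τ) ^ 2 - r ^ 2)))
        volume r (t - r) ∧
      (∫ τ in r..(t - r),
          1 / (Real.sqrt (τ ^ 2 - r ^ 2) * Real.sqrt ((t - τ) ^ 2 - r ^ 2))) =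
        ∫ φ in (-(π/2))..(π/2),
          1 / Real.sqrt ((t/2 + r) ^ 2 - (t/2 - r) ^ 2 * (Real.sin φ) ^ 2) := by
  have ha : 0 < t / 2 - r := by linarith
  have hends : Ioo r (t - r) = Ioo (t / 2 - (t / 2 - r)) (t / 2 + (t / 2 - r)) := by
    congr 1 <;> ring
  have hsubst : EqOn
      (fun φ => ((t / 2 - r) * cos φ) • (1 / (√((t / 2 + (t / 2 - r) * sin φ) ^ 2 - r ^ 2) *
        √((t - (t / 2 + (t / 2 - r) * sin φ)) ^ 2 - r ^ 2))))
      (fun φ => 1 / √((t / 2 + r) ^ 2 - (t / 2 - r) ^ 2 * sin φ ^ 2)) (Ioo (-(π / 2)) (π / 2)) :=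
    fun φ hφ => mul_cos_mul_kernel_sin_subst hr h2r (cos_pos_of_mem_Ioo hφ)
  have hrhs : IntegrableOn (fun φ => 1 / √((t / 2 + r) ^ 2 - (t / 2 - r) ^ 2 * sin φ ^ 2))
      (Ioo (-(π / 2)) (π / 2)) :=
    (continuous_one_div_sqrt_sq_sub_sq_mul_sin_sq (by nlinarith)).integrableOn_Icc.mono_set
      Ioo_subset_Icc_self
  have hle : r ≤ t - r := by linarith
  have hle' : -(π / 2) ≤ π / 2 := by linarith [pi_pos]
  refine ⟨(intervalIntegrable_iff_integrableOn_Ioo_of_le hle).2 ?_, ?_⟩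
  · rw [hends, integrableOn_Ioo_iff_sin_subst ha]
    exact hrhs.congr_fun hsubst.symm measurableSet_Ioo
  · rw [integral_of_le hle, integral_of_le hle', integral_Ioc_eq_integral_Ioo,
      integral_Ioc_eq_integral_Ioo, hends, setIntegral_Ioo_eq_sin_subst ha]
    exact setIntegral_congr_fun measurableSet_Ioo hsubst
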